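/- Let D be an integral domain, ⋆ a semistar operation on D, ι: D ↪ D^⋆ the canonical embedding, and ⋆_ι the semistar operation on D^⋆ defined by E^{⋆_ι} := E^⋆ for E ∈ F̄(D^⋆). Then D is ⋆-coherent if and only if D^⋆ is ⋆_ι-coherent; moreover, if D is ⋆-extracoherent, then D^⋆ is ⋆_ι-extracoherent. -/

import Mathlib

/-!
If `E` is spanned over `D^⋆` by a finite set `S`, then as a `D`-module `E = (S)·D^⋆`, and
`(S) ⊆ (S)·D^⋆ ⊆ (S)^⋆` gives `E^{⋆_ι} = (S)^⋆`. So, through finite generating sets, the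
`⋆_ι`-closures of finitely generated `D^⋆`-submodules of `K` are exactly the `⋆`-closures of
finitely generated `D`-submodules, and the coherence conditions on both sides correspond.
The intersection hypotheses hold automatically: two nonzero `D`-submodules of `K` always meet.
-/

open Submodule

namespace Semistar

/-- A semistar operation on an integral domain `D` with quotient field `K`:
a map on `D`-submodules of `K` satisfying the semistar axioms on nonzero submodules. -/
structure SemistarOp (D K : Type*) [CommRing D] [Field K] [Algebra D K] where
  star : Submodule D K → Submodule D K
  star_smul_mul : ∀ x : K, x ≠ 0 → ∀ E : Submodule D K, E ≠ ⊥ →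
    star (span D {x} * E) = span D {x} * star E
  star_mono : ∀ E F : Submodule D K, E ≠ ⊥ → F ≠ ⊥ → E ≤ F → star E ≤ star F
  le_star : ∀ E : Submodule D K, E ≠ ⊥ → E ≤ star E
  star_star : ∀ E : Submodule D K, E ≠ ⊥ → star (star E) = star E

variable {D K : Type*} [CommRing D] [Field K] [Algebra D K]

/-- The finite-type semistar operation `⋆_f` associated to `⋆`. -/
def finStar (t : Submodule D K → Submodule D K) : Submodule D K → Submodule D K :=
  fun E => ⨆ F ∈ {F : Submodule D K | F ≠ ⊥ ∧ F.FG ∧ F ≤ E}, t F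

/-- The image in `K` of an ideal of `D`. -/
def idealToK (I : Ideal D) : Submodule D K :=
  Submodule.map (Algebra.linearMap D K) I

/-- `I` is a quasi-`⋆`-ideal: a nonzero ideal of `D` with `I^⋆ ∩ D = I`. -/
def IsQuasiIdeal (t : Submodule D K → Submodule D K) (I : Ideal D) : Prop :=
  I ≠ ⊥ ∧ t (idealToK I) ⊓ 1 = idealToK I

/-- `M` is a quasi-`⋆`-maximal ideal: maximal among quasi-`⋆`-ideals. -/
def IsQuasiMaximal (t : Submodule D K → Submodule D K) (M : Ideal D) : Prop :=
  IsQuasiIdeal t M ∧ ∀ J : Ideal D, IsQuasiIdeal t J → M ≤ J → M = J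

/-- The localization `E·D_M` of a submodule `E` of `K` at (the complement of) an ideal `M`. -/
def locAt (M : Ideal D) (E : Submodule D K) : Submodule D K where
  carrier := {x : K | ∃ s ∈ Submonoid.closure ((M : Set D)ᶜ), s • x ∈ E}
  add_mem' := by
    rintro x y ⟨s, hs, hsx⟩ ⟨t, ht, hty⟩
    refine ⟨s * t, mul_mem hs ht, ?_⟩
    have h1 : (s * t) • x ∈ E := by rw [mul_comm, mul_smul]; exact E.smul_mem t hsx
    have h2 : (s * t) • y ∈ E := by rw [mul_smul]; exact E.smul_mem s hty
    rw [smul_add]; exact E.add_mem h1 h2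
  zero_mem' := ⟨1, Submonoid.one_mem _, by simp⟩
  smul_mem' := by
    rintro c x ⟨s, hs, hsx⟩
    exact ⟨s, hs, by rw [smul_comm]; exact E.smul_mem c hsx⟩

/-- The spectral semistar operation `⋆̃` associated to `⋆`, defined by
`E^⋆̃ = ⋂ { E·D_M : M quasi-`⋆_f`-maximal }`. -/
def tildeStar (s : SemistarOp D K) : Submodule D K → Submodule D K :=
  fun E => ⨅ M ∈ {M : Ideal D | IsQuasiMaximal (finStar s.star) M}, locAt M E

/-- The localizing system `F^⋆` of ideals `I` with `I^⋆ = D^⋆`. -/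
def starLS (s : SemistarOp D K) : Set (Ideal D) :=
  {I : Ideal D | I ≠ ⊥ ∧ s.star (idealToK I) = s.star 1}

/-- The stable semistar operation `⋆̄` associated to `⋆`:
`E^⋆̄ = ⋃ {(E : J) : J ∈ F^⋆}`. -/
def barStar (s : SemistarOp D K) : Submodule D K → Submodule D K :=
  fun E => ⨆ J ∈ starLS s, E / idealToK J

/-- `I` is `⋆`-invertible: `(I·I⁻¹)^⋆ = D^⋆`. -/
def IsStarInvertible (t : Submodule D K → Submodule D K) (I : Submodule D K) : Prop :=
  t (I * (1 / I)) = t 1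

/-- `D` is a `⋆`-domain: every nonzero finitely generated `D`-submodule of `K`
is `⋆`-invertible. -/
def IsStarDomain (t : Submodule D K → Submodule D K) : Prop :=
  ∀ I : Submodule D K, I ≠ ⊥ → I.FG → IsStarInvertible t I

/-- `D` is a Prüfer `⋆`-multiplication domain: every nonzero finitely generated
ideal of `D` is `⋆_f`-invertible. -/
def IsPMD (t : Submodule D K → Submodule D K) : Prop :=
  ∀ I : Submodule D K, I ≠ ⊥ → I.FG → I ≤ 1 → IsStarInvertible (finStar t) I

/-- `D` is a P⋆MD for the semistar operation `s`. -/
abbrev IsPStarMD (s : SemistarOp D K) : Prop := IsPMD s.star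

/-- Equality of two semistar operations (as maps on nonzero submodules):
`D` is a `(∗₁, ∗₂)`-domain. -/
def StarEq (t₁ t₂ : Submodule D K → Submodule D K) : Prop :=
  ∀ E : Submodule D K, E ≠ ⊥ → t₁ E = t₂ E

/-- `⋆` is a.b. -/
def IsAB (t : Submodule D K → Submodule D K) : Prop :=
  ∀ E : Submodule D K, E ≠ ⊥ → E.FG → ∀ F G : Submodule D K, F ≠ ⊥ → G ≠ ⊥ →
    t (E * F) ≤ t (E * G) → t F ≤ t G

/-- `⋆` is e.a.b. -/
def IsEAB (t : Submodule D K → Submodule D K) : Prop :=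
  ∀ E F G : Submodule D K, E ≠ ⊥ → E.FG → F ≠ ⊥ → F.FG → G ≠ ⊥ → G.FG →
    t (E * F) ≤ t (E * G) → t F ≤ t G

/-- `D` is quasi-`⋆`-integrally closed: `D^⋆ = ⋃ {(F^⋆ : F^⋆) : F ∈ f(D)}`. -/
def IsQuasiStarIntegrallyClosed (t : Submodule D K → Submodule D K) : Prop :=
  (t 1 : Set K) = ⋃ F ∈ {F : Submodule D K | F ≠ ⊥ ∧ F.FG}, ((t F / t F : Submodule D K) : Set K)

/-- The submodule `S` of `K` is integrally closed in `K`. -/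
def IsIntegrallyClosedIn (S : Submodule D K) : Prop :=
  ∀ x : K, (∃ p : Polynomial K, p.Monic ∧ (∀ i, p.coeff i ∈ S) ∧ Polynomial.eval x p = 0) → x ∈ S

/-- `D` is `⋆`-Noetherian: ACC on quasi-`⋆`-ideals. -/
def IsStarNoetherian (t : Submodule D K → Submodule D K) : Prop :=
  ∀ c : ℕ → Ideal D, (∀ n, IsQuasiIdeal t (c n)) → Monotone c →
    ∃ n, ∀ m, n ≤ m → c m = c n

/-- `D` is `⋆`-extracoherent. -/
def IsExtraCoherent (t : Submodule D K → Submodule D K) : Prop :=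
  ∀ E F : Submodule D K, E ≠ ⊥ → E.FG → F ≠ ⊥ → F.FG → E ⊓ F ≠ ⊥ →
    ∃ J : Submodule D K, J ≠ ⊥ ∧ J.FG ∧ J ≤ E ⊓ F ∧ t J = t E ⊓ t F

/-- `D` is truly `⋆`-coherent. -/
def IsTrulyCoherent (t : Submodule D K → Submodule D K) : Prop :=
  ∀ E F : Submodule D K, E ≠ ⊥ → E.FG → F ≠ ⊥ → F.FG → E ⊓ F ≠ ⊥ →
    ∃ J : Submodule D K, J ≠ ⊥ ∧ J.FG ∧ t J = t (E ⊓ F)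

/-- `D` is `⋆`-coherent. -/
def IsCoherent (t : Submodule D K → Submodule D K) : Prop :=
  ∀ E F : Submodule D K, E ≠ ⊥ → E.FG → F ≠ ⊥ → F.FG → E ⊓ F ≠ ⊥ →
    ∃ J : Submodule D K, J ≠ ⊥ ∧ J.FG ∧ t J = t E ⊓ t F

/-- `D` is `⋆`-quasi-coherent. -/
def IsQuasiCoherent (t : Submodule D K → Submodule D K) : Prop :=
  ∀ F : Submodule D K, F ≠ ⊥ → F.FG →
    ∃ G : Submodule D K, G ≠ ⊥ ∧ G.FG ∧ t ((1 : Submodule D K) / F) = t G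

/-- `D` is an `H(⋆)`-domain. -/
def IsHDomain (t : Submodule D K → Submodule D K) : Prop :=
  ∀ I : Ideal D, I ≠ ⊥ → t (idealToK I) = t 1 →
    ∃ J : Ideal D, J ≠ ⊥ ∧ J.FG ∧ J ≤ I ∧ t (idealToK J) = t 1

/-- `D` is an `I(⋆)`-domain. -/
def IsIDomain (s : SemistarOp D K) : Prop :=
  ∀ I : Submodule D K, I ≠ ⊥ → I.FG → I ≤ 1 →
    (IsStarInvertible s.star I ↔ IsStarInvertible (finStar s.star) I)

theorem _root_.Submodule.restrictScalars_span_subalgebra {R A : Type*} [CommSemiring R]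
    [CommSemiring A] [Algebra R A] (T : Subalgebra R A) (S : Set A) :
    (span T S).restrictScalars R = span R S * Subalgebra.toSubmodule T := by
  apply le_antisymm
  · intro x hx
    induction hx using span_induction with
    | mem y hy =>
      have hone : (1 : A) ∈ Subalgebra.toSubmodule T := T.one_mem
      simpa using mul_mem_mul (subset_span hy) hone
    | zero => exact zero_mem _
    | add y z _ _ hy hz => exact add_mem hy hz
    | smul t y _ hy =>
      have hty : y * t ∈ span R S * Subalgebra.toSubmodule T * Subalgebra.toSubmodule T :=
        mul_mem_mul hy t.2
      rw [mul_assoc, (Subalgebra.isIdempotentElem_toSubmodule T).eq] at hty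
      simpa [Subalgebra.smul_def, mul_comm] using hty
  · rw [mul_le]
    intro m hm t ht
    simpa [Subalgebra.smul_def, mul_comm] using
      (span T S).smul_mem ⟨t, ht⟩ (span_le_restrictScalars R T S hm)

theorem _root_.Submodule.span_eq_bot_iff_span_eq_bot (R A : Type*) {M : Type*} [Semiring R]
    [Semiring A] [AddCommMonoid M] [Module R M] [Module A M] {S : Set M} :
    span A S = ⊥ ↔ span R S = ⊥ := by
  simp only [span_eq_bot]

theorem _root_.Submodule.inf_ne_bot_of_isFractionRing [IsDomain D] [IsFractionRing D K]
    {E F : Submodule D K} (hE : E ≠ ⊥) (hF : F ≠ ⊥) : E ⊓ F ≠ ⊥ := by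
  obtain ⟨x, hxE, hx⟩ := exists_mem_ne_zero_of_ne_bot hE
  obtain ⟨y, hyF, hy⟩ := exists_mem_ne_zero_of_ne_bot hF
  obtain ⟨⟨a, b⟩, hab⟩ := IsLocalization.surj (nonZeroDivisors D) (x / y)
  have hb : algebraMap D K b ≠ 0 := IsFractionRing.to_map_ne_zero_of_mem_nonZeroDivisors b.2
  -- `x / y = a / b` gives a common nonzero multiple `b • x = a • y` of `x` and `y`.
  have hcommon : (b : D) • x = a • y := by
    simp only [Algebra.smul_def, ← hab]
    field_simp
  refine (Submodule.ne_bot_iff _).2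
    ⟨(b : D) • x, ⟨E.smul_mem _ hxE, hcommon ▸ F.smul_mem _ hyF⟩, ?_⟩
  rw [Algebra.smul_def]
  exact mul_ne_zero hb hx

theorem _root_.Submodule.span_inf_span_ne_bot [IsDomain D] [IsFractionRing D K]
    (T : Subalgebra D K) {SE SF : Set K} (hE : span D SE ≠ ⊥) (hF : span D SF ≠ ⊥) :
    span T SE ⊓ span T SF ≠ ⊥ := by
  rw [Ne, ← restrictScalars_eq_bot_iff D, restrictScalars_inf]
  exact ne_bot_of_le_ne_bot (inf_ne_bot_of_isFractionRing hE hF)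
    (inf_le_inf (span_le_restrictScalars D T SE) (span_le_restrictScalars D T SF))

namespace SemistarOp

variable (s : SemistarOp D K)

theorem star_ne_bot {E : Submodule D K} (hE : E ≠ ⊥) : s.star E ≠ ⊥ :=
  ne_bot_of_le_ne_bot hE (s.le_star E hE)

theorem mul_star_one_le_star {E : Submodule D K} (hE : E ≠ ⊥) : E * s.star 1 ≤ s.star E := by
  have hone : (1 : Submodule D K) ≠ ⊥ := by simp [one_eq_span]
  rw [mul_le]
  intro m hm n hn
  rcases eq_or_ne m 0 with rfl | hm0
  · simp
  · have hmn : m * n ∈ s.star (span D {m}) := by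
      rw [← mul_one (span D {m}), s.star_smul_mul m hm0 1 hone]
      exact mul_mem_mul (mem_span_singleton_self m) hn
    have hspan : span D {m} ≠ ⊥ := by simpa using hm0
    exact s.star_mono _ _ hspan hE ((span_singleton_le_iff_mem m E).2 hm) hmn

theorem star_mul_star_one {E : Submodule D K} (hE : E ≠ ⊥) :
    s.star (E * s.star 1) = s.star E := by
  have hle : E ≤ E * s.star 1 := by
    simpa using mul_le_mul_right (s.le_star 1 (by simp [one_eq_span])) E
  apply le_antisymm
  · calc s.star (E * s.star 1) ≤ s.star (s.star E) :=
          s.star_mono _ _ (ne_bot_of_le_ne_bot hE hle) (s.star_ne_bot hE)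
            (s.mul_star_one_le_star hE)
      _ = s.star E := s.star_star E hE
  · exact s.star_mono _ _ hE (ne_bot_of_le_ne_bot hE hle) hle

end SemistarOp

section Transfer

variable {s : SemistarOp D K} {T : Subalgebra D K} {sIota : SemistarOp T K}
  (hT : Subalgebra.toSubmodule T = s.star 1)
  (hcompat : ∀ E : Submodule T K, E ≠ ⊥ →
    (sIota.star E).restrictScalars D = s.star (E.restrictScalars D))

include hT hcompat

theorem restrictScalars_star_span {S : Set K} (hS : span D S ≠ ⊥) :
    (sIota.star (span T S)).restrictScalars D = s.star (span D S) := by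
  rw [hcompat _ ((span_eq_bot_iff_span_eq_bot D T).not.2 hS), restrictScalars_span_subalgebra, hT,
    s.star_mul_star_one hS]

theorem star_span_eq_inf_iff {SJ SE SF : Set K} (hJ : span D SJ ≠ ⊥) (hE : span D SE ≠ ⊥)
    (hF : span D SF ≠ ⊥) :
    sIota.star (span T SJ) = sIota.star (span T SE) ⊓ sIota.star (span T SF) ↔
      s.star (span D SJ) = s.star (span D SE) ⊓ s.star (span D SF) := by
  rw [← (restrictScalars_injective D T K).eq_iff, restrictScalars_inf,
    restrictScalars_star_span hT hcompat hJ, restrictScalars_star_span hT hcompat hE,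
    restrictScalars_star_span hT hcompat hF]

variable [IsDomain D] [IsFractionRing D K]

theorem isCoherent_subalgebra_of_isCoherent (hcoh : IsCoherent s.star) :
    IsCoherent sIota.star := by
  rintro _ _ hE ⟨SE, rfl⟩ hF ⟨SF, rfl⟩ -
  rw [Ne, span_eq_bot_iff_span_eq_bot D T] at hE hF
  obtain ⟨_, hJ, ⟨SJ, rfl⟩, hJstar⟩ :=
    hcoh _ _ hE ⟨SE, rfl⟩ hF ⟨SF, rfl⟩ (inf_ne_bot_of_isFractionRing hE hF)
  exact ⟨span T SJ, (span_eq_bot_iff_span_eq_bot D T).not.2 hJ, ⟨SJ, rfl⟩,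
    (star_span_eq_inf_iff hT hcompat hJ hE hF).2 hJstar⟩

theorem isCoherent_of_isCoherent_subalgebra (hcoh : IsCoherent sIota.star) :
    IsCoherent s.star := by
  rintro _ _ hE ⟨SE, rfl⟩ hF ⟨SF, rfl⟩ -
  have hE' := (span_eq_bot_iff_span_eq_bot D T).not.2 hE
  have hF' := (span_eq_bot_iff_span_eq_bot D T).not.2 hF
  obtain ⟨_, hJ, ⟨SJ, rfl⟩, hJstar⟩ :=
    hcoh _ _ hE' ⟨SE, rfl⟩ hF' ⟨SF, rfl⟩ (span_inf_span_ne_bot T hE hF)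
  rw [Ne, span_eq_bot_iff_span_eq_bot D T] at hJ
  exact ⟨span D SJ, hJ, ⟨SJ, rfl⟩, (star_span_eq_inf_iff hT hcompat hJ hE hF).1 hJstar⟩

theorem isExtraCoherent_subalgebra_of_isExtraCoherent (hcoh : IsExtraCoherent s.star) :
    IsExtraCoherent sIota.star := by
  rintro _ _ hE ⟨SE, rfl⟩ hF ⟨SF, rfl⟩ -
  rw [Ne, span_eq_bot_iff_span_eq_bot D T] at hE hF
  obtain ⟨_, hJ, ⟨SJ, rfl⟩, hJle, hJstar⟩ :=
    hcoh _ _ hE ⟨SE, rfl⟩ hF ⟨SF, rfl⟩ (inf_ne_bot_of_isFractionRing hE hF)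
  have hJle' : span T (SJ : Set K) ≤ span T (SE : Set K) ⊓ span T (SF : Set K) := by
    rw [← span_span_of_tower D T (SJ : Set K)]
    have hJ_le : span D (SJ : Set K) ≤
        (span T (SE : Set K) ⊓ span T (SF : Set K)).restrictScalars D :=
      hJle.trans (inf_le_inf (span_le_restrictScalars D T _) (span_le_restrictScalars D T _))
    exact span_le.2 fun x hx => hJ_le hx
  exact ⟨span T SJ, (span_eq_bot_iff_span_eq_bot D T).not.2 hJ, ⟨SJ, rfl⟩, hJle',
    (star_span_eq_inf_iff hT hcompat hJ hE hF).2 hJstar⟩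

end Transfer

theorem statement11 {D K : Type*} [CommRing D] [IsDomain D] [Field K] [Algebra D K]
    [IsFractionRing D K] (s : SemistarOp D K)
    (T : Subalgebra D K) (hT : Subalgebra.toSubmodule T = s.star 1)
    (sIota : SemistarOp ↥T K)
    (hcompat : ∀ E : Submodule ↥T K, E ≠ ⊥ →
      Submodule.restrictScalars D (sIota.star E) = s.star (Submodule.restrictScalars D E)) :
    (IsCoherent s.star ↔ IsCoherent sIota.star) ∧
    (IsExtraCoherent s.star → IsExtraCoherent sIota.star) :=
  ⟨⟨isCoherent_subalgebra_of_isCoherent hT hcompat,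
      isCoherent_of_isCoherent_subalgebra hT hcompat⟩,
    isExtraCoherent_subalgebra_of_isExtraCoherent hT hcompat⟩

end Semistar
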